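/- arXiv:2312.16296 — 3 statements merged into one kernel-verified Lean document; each statement's English description precedes it below -/
import Mathlib

section
/- Let Λ be a free ℤ-module of finite rank equipped with a symmetric ℤ-valued bilinear form ∘ such that λ∘λ ∈ 2ℤ for every λ ∈ Λ (Λ is even and integral). Let {λ_i}_{i=1}^d and {λ̃_i}_{i=1}^d be two bases of Λ, and let ε and ε̃ be the 2-cocycles defined from these two bases respectively (ε(λ_i,λ_j) = λ_i∘λ_j if i>j, 0 if i≤j, extended ℤ-bilinearly, and analogously for ε̃ with the basis {λ̃_i}). Let Ĝ_ε and Ĝ_{ε̃} be the groups on the set {±1}×Λ with multiplications (θ,a)·(τ,b) = (θτ(−1)^{ε(a,b)}, a+b) and (θ,a)·(τ,b) = (θτ(−1)^{ε̃(a,b)}, a+b). Then the two central extensions are equivalent: there exists a group isomorphism ψ : Ĝ_ε → Ĝ_{ε̃} such that ψ(θ,0) = (θ,0) for θ ∈ {±1} and the second component of ψ(θ,a) equals a for all (θ,a) ∈ Ĝ_ε. -/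
/-- The multiplication of the central extension `ℤ₂ × Λ` of `Λ` by `ℤ₂ = {±1}` determined
by the 2-cocycle `ε`: `(θ,a)·(τ,b) = (θτ(−1)^{ε(a,b)}, a+b)`. -/
def cexMul {M : Type*} [AddCommGroup M] (ε : M →ₗ[ℤ] M →ₗ[ℤ] ℤ) (x y : ℤˣ × M) : ℤˣ × M :=
  (x.1 * y.1 * (-1 : ℤˣ) ^ (ε x.2 y.2), x.2 + y.2)

namespace CocAux

/-- The sign character `ZMod 2 → ℤˣ`. -/
def chi (t : ZMod 2) : ℤˣ := if t = 0 then 1 else -1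

lemma chi_add : ∀ s t : ZMod 2, chi (s + t) = chi s * chi t := by decide

lemma chi_mul_self : ∀ t : ZMod 2, chi t * chi t = 1 := by decide

lemma chi_coe_mul_self : ∀ t : ZMod 2, ((chi t : ℤ)) * ((chi t : ℤ)) = 1 := by decide

lemma zmod2_add_eq_zero : ∀ a b : ZMod 2, a + b = 0 → a = b := by decide

lemma zmod2_neg : ∀ a : ZMod 2, -a = a := by decide

lemma sq1 : ((-1 : ℤˣ)) ^ (2:ℤ) = 1 := by decide

lemma neg_one_zpow (n : ℤ) : (-1 : ℤˣ) ^ n = chi ((n : ZMod 2)) := by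
  rcases Int.even_or_odd n with ⟨k, hk⟩ | ⟨k, hk⟩
  · subst hk
    have h0 : ((k + k : ℤ) : ZMod 2) = 0 := by
      push_cast
      rw [← two_mul]
      have : (2 : ZMod 2) = 0 := by decide
      rw [this, zero_mul]
    rw [h0]
    have : (k + k : ℤ) = 2 * k := by ring
    rw [this, zpow_mul, sq1, one_zpow]
    rfl
  · subst hk
    have h1 : ((2 * k + 1 : ℤ) : ZMod 2) = 1 := by
      push_cast
      have : (2 : ZMod 2) = 0 := by decide
      rw [this, zero_mul, zero_add]
    rw [h1, zpow_add, zpow_mul, sq1, one_zpow, one_mul]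
    rfl

/-- The triangular number `a(a+1)/2`, an integer "quadratic refinement" gadget. -/
def hI (a : ℤ) : ℤ := a * (a + 1) / 2

lemma two_hI (a : ℤ) : 2 * hI a = a * (a + 1) := by
  have : (2:ℤ) ∣ a * (a+1) := (Int.even_mul_succ_self a).two_dvd
  exact Int.mul_ediv_cancel' this

lemma hI_add (a c : ℤ) : hI (a + c) = hI a + hI c + a * c := by
  have h2 : (2:ℤ) ≠ 0 := by norm_num
  apply mul_left_cancel₀ h2
  rw [mul_add, mul_add, two_hI, two_hI, two_hI]; ring

lemma hI_zero : hI 0 = 0 := rfl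

noncomputable def l2 : ℤ →ₗ[ℤ] ZMod 2 := (Int.castAddHom (ZMod 2)).toIntLinearMap

@[simp] lemma l2_apply (n : ℤ) : l2 n = (n : ZMod 2) := rfl

variable {d : ℕ} {M : Type*} [AddCommGroup M] [Module ℤ M]

/-- Mod 2, `ε(x,y) + ε(y,x) = B(x,y)` for a triangular cocycle of an even symmetric form. -/
lemma key (B : M →ₗ[ℤ] M →ₗ[ℤ] ℤ)
    (hsymm : ∀ x y : M, B x y = B y x) (heven : ∀ x : M, (2 : ℤ) ∣ B x x)
    (b : Module.Basis (Fin d) ℤ M) (ε : M →ₗ[ℤ] M →ₗ[ℤ] ℤ)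
    (hε : ∀ i j : Fin d, ε (b i) (b j) = if j < i then B (b i) (b j) else 0)
    (x y : M) :
    ((ε x y : ℤ) : ZMod 2) + ((ε y x : ℤ) : ZMod 2) = ((B x y : ℤ) : ZMod 2) := by
  have h : ε.compr₂ l2 + ε.flip.compr₂ l2 = B.compr₂ l2 := by
    apply b.ext; intro i
    apply b.ext; intro j
    simp only [LinearMap.add_apply, LinearMap.compr₂_apply, LinearMap.flip_apply, l2_apply]
    rw [hε i j, hε j i]
    rcases lt_trichotomy i j with h | h | h
    · rw [if_neg (asymm h), if_pos h, hsymm (b j) (b i)]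
      push_cast; ring
    · subst h
      simp only [lt_irrefl, if_neg, if_false]
      have h0 := (ZMod.intCast_zmod_eq_zero_iff_dvd (B (b i) (b i)) 2).2 (heven (b i))
      rw [h0]; norm_num
    · rw [if_pos h, if_neg (asymm h)]
      push_cast; ring
  have h2 := congrArg (fun F : M →ₗ[ℤ] M →ₗ[ℤ] ZMod 2 => F x y) h
  simpa using h2

lemma bilin_expand (b : Module.Basis (Fin d) ℤ M) (F : M →ₗ[ℤ] M →ₗ[ℤ] ℤ) (x y : M) :
    F x y = ∑ i : Fin d, ∑ j : Fin d, b.repr x i * (b.repr y j * F (b i) (b j)) := by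
  conv_lhs => rw [← b.sum_repr x, ← b.sum_repr y]
  simp only [map_sum, map_smul, LinearMap.coe_sum, Finset.sum_apply, LinearMap.smul_apply,
    smul_eq_mul]
  rw [Finset.sum_comm]
  refine Finset.sum_congr rfl fun i _ => ?_
  rw [Finset.mul_sum]
  refine Finset.sum_congr rfl fun j _ => ?_
  ring

set_option linter.unnecessarySeqFocus false in
lemma sum_aux (u v : Fin d → ZMod 2) (S : Fin d → Fin d → ZMod 2)
    (hS : ∀ i j, S i j = S j i) :
    ((∑ i, ∑ j, if j < i then (u i + v i) * ((u j + v j) * S i j) else 0)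
      + ∑ i, u i * v i * S i i)
    = ((∑ i, ∑ j, if j < i then u i * (u j * S i j) else 0)
      + ∑ i, ∑ j, if j < i then v i * (v j * S i j) else 0)
      + ∑ i, ∑ j, u i * (v j * S i j) := by
  have expand : (∑ i, ∑ j, if j < i then (u i + v i) * ((u j + v j) * S i j) else 0)
      = (∑ i, ∑ j, if j < i then u i * (u j * S i j) else 0)
      + (∑ i, ∑ j, if j < i then v i * (v j * S i j) else 0)
      + (∑ i, ∑ j, if j < i then u i * (v j * S i j) else 0)
      + (∑ i, ∑ j, if j < i then v i * (u j * S i j) else 0) := by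
    rw [← Finset.sum_add_distrib, ← Finset.sum_add_distrib, ← Finset.sum_add_distrib]
    refine Finset.sum_congr rfl fun i _ => ?_
    rw [← Finset.sum_add_distrib, ← Finset.sum_add_distrib, ← Finset.sum_add_distrib]
    refine Finset.sum_congr rfl fun j _ => ?_
    by_cases h : j < i <;> simp [h] <;> ring
  have transp : (∑ i, ∑ j, if j < i then v i * (u j * S i j) else 0)
      = ∑ i, ∑ j, if i < j then u i * (v j * S i j) else 0 := by
    rw [Finset.sum_comm]
    refine Finset.sum_congr rfl fun i _ => Finset.sum_congr rfl fun j _ => ?_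
    by_cases h : i < j <;> simp [h, hS i j] <;> ring
  have split : (∑ i, ∑ j, u i * (v j * S i j))
      = (∑ i, ∑ j, if j < i then u i * (v j * S i j) else 0)
      + (∑ i, ∑ j, if i < j then u i * (v j * S i j) else 0)
      + (∑ i, u i * v i * S i i) := by
    rw [← Finset.sum_add_distrib, ← Finset.sum_add_distrib]
    refine Finset.sum_congr rfl fun i _ => ?_
    have hdiag : (∑ j, if (i:Fin d) = j then u i * (v j * S i j) else 0) = u i * v i * S i i := by
      rw [Finset.sum_ite_eq (Finset.univ) i (fun j => u i * (v j * S i j))]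
      simp [mul_assoc]
    rw [← hdiag, ← Finset.sum_add_distrib, ← Finset.sum_add_distrib]
    refine Finset.sum_congr rfl fun j _ => ?_
    rcases lt_trichotomy j i with h | h | h
    · rw [if_pos h, if_neg (asymm h), if_neg (show ¬ i = j by omega)]; ring
    · subst h; simp
    · rw [if_neg (asymm h), if_pos h, if_neg (show ¬ i = j by omega)]; ring
  rw [expand, transp, split]
  ring

end CocAux

@[simp] lemma CocAux.chi_zero : CocAux.chi 0 = 1 := rfl

/-- Let `Λ` be a free `ℤ`-module of finite rank with an even, symmetric, `ℤ`-valued bilinear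
form `B`, let `b`, `b'` be two bases of `Λ`, and let `ε`, `ε'` be the 2-cocycles determined by
these bases (`ε(λᵢ,λⱼ) = B(λᵢ,λⱼ)` for `i > j`, `0` for `i ≤ j`, extended bilinearly).  Then
the two central extensions of `Λ` by `{±1}` determined by `ε` and `ε'` are equivalent:
there is a group isomorphism `ψ` between them which fixes the central `{±1}` pointwise and
induces the identity on `Λ`. -/
theorem cocycle_basis_change_equiv {d : ℕ} {M : Type*} [AddCommGroup M]
    (B : M →ₗ[ℤ] M →ₗ[ℤ] ℤ)
    (hsymm : ∀ x y : M, B x y = B y x) (heven : ∀ x : M, (2 : ℤ) ∣ B x x)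
    (b b' : Module.Basis (Fin d) ℤ M)
    (ε ε' : M →ₗ[ℤ] M →ₗ[ℤ] ℤ)
    (hε : ∀ i j : Fin d, ε (b i) (b j) = if j < i then B (b i) (b j) else 0)
    (hε' : ∀ i j : Fin d, ε' (b' i) (b' j) = if j < i then B (b' i) (b' j) else 0) :
    ∃ ψ : (ℤˣ × M) ≃ (ℤˣ × M),
      (∀ x y : ℤˣ × M, ψ (cexMul ε x y) = cexMul ε' (ψ x) (ψ y)) ∧
      (∀ θ : ℤˣ, ψ (θ, 0) = (θ, 0)) ∧
      (∀ p : ℤˣ × M, (ψ p).2 = p.2) := by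
  classical
  -- the difference cocycle on the basis `b`, and its mod-2 reduction
  let D : Fin d → Fin d → ℤ := fun i j => ε (b i) (b j) - ε' (b i) (b j)
  let S : Fin d → Fin d → ZMod 2 := fun i j => ((D i j : ℤ) : ZMod 2)
  have hSsym : ∀ i j, S i j = S j i := by
    intro i j
    apply CocAux.zmod2_add_eq_zero
    have h1 := CocAux.key B hsymm heven b ε hε (b i) (b j)
    have h2 := CocAux.key B hsymm heven b' ε' hε' (b i) (b j)
    show ((D i j : ℤ) : ZMod 2) + ((D j i : ℤ) : ZMod 2) = 0
    show (((ε (b i) (b j) - ε' (b i) (b j) : ℤ)) : ZMod 2)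
        + (((ε (b j) (b i) - ε' (b j) (b i) : ℤ)) : ZMod 2) = 0
    push_cast
    linear_combination h1 - h2
  -- the quadratic "gauge" function
  let T : M → ℤ := fun x =>
    (∑ i, ∑ j, if j < i then b.repr x i * (b.repr x j * D i j) else 0)
    + ∑ i, CocAux.hI (b.repr x i) * D i i
  let f : M → ZMod 2 := fun x => ((T x : ℤ) : ZMod 2)
  have castT : ∀ z : M, f z = (∑ i, ∑ j, if j < i then
        ((b.repr z i : ℤ) : ZMod 2) * (((b.repr z j : ℤ) : ZMod 2) * S i j) else 0)
      + ∑ i, ((CocAux.hI (b.repr z i) : ℤ) : ZMod 2) * S i i := by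
    intro z
    show ((((∑ i, ∑ j, if j < i then b.repr z i * (b.repr z j * D i j) else 0)
      + ∑ i, CocAux.hI (b.repr z i) * D i i : ℤ)) : ZMod 2) = _
    push_cast [apply_ite (fun n : ℤ => (n : ZMod 2))]
    rfl
  have hf_add : ∀ x y : M, f (x + y) = f x + f y + ((ε x y - ε' x y : ℤ) : ZMod 2) := by
    intro x y
    have hexp : ((ε x y - ε' x y : ℤ) : ZMod 2)
        = ∑ i, ∑ j, ((b.repr x i : ℤ) : ZMod 2)
            * (((b.repr y j : ℤ) : ZMod 2) * S i j) := by
      rw [CocAux.bilin_expand b ε x y, CocAux.bilin_expand b ε' x y,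
        ← Finset.sum_sub_distrib]
      push_cast
      refine Finset.sum_congr rfl fun i _ => ?_
      rw [← Finset.sum_sub_distrib]
      refine Finset.sum_congr rfl fun j _ => ?_
      show _ = _ * (_ * (((ε (b i) (b j) - ε' (b i) (b j) : ℤ)) : ZMod 2))
      push_cast
      ring
    have key2 := CocAux.sum_aux (fun i => ((b.repr x i : ℤ) : ZMod 2))
      (fun i => ((b.repr y i : ℤ) : ZMod 2)) S hSsym
    rw [castT (x + y), castT x, castT y, hexp]
    have hrepr : ∀ i, b.repr (x + y) i = b.repr x i + b.repr y i := by
      intro i; rw [map_add]; rfl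
    simp only [hrepr, CocAux.hI_add]
    push_cast
    have hdiag : (∑ i, (((CocAux.hI (b.repr x i) : ℤ) : ZMod 2)
          + ((CocAux.hI (b.repr y i) : ℤ) : ZMod 2)
          + ((b.repr x i : ℤ) : ZMod 2) * ((b.repr y i : ℤ) : ZMod 2)) * S i i)
        = (∑ i, ((CocAux.hI (b.repr x i) : ℤ) : ZMod 2) * S i i)
        + (∑ i, ((CocAux.hI (b.repr y i) : ℤ) : ZMod 2) * S i i)
        + ∑ i, ((b.repr x i : ℤ) : ZMod 2) * ((b.repr y i : ℤ) : ZMod 2) * S i i := by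
      rw [← Finset.sum_add_distrib, ← Finset.sum_add_distrib]
      refine Finset.sum_congr rfl fun i _ => ?_
      ring
    rw [hdiag]
    linear_combination key2
  have f0 : f 0 = 0 := by
    show ((T 0 : ℤ) : ZMod 2) = 0
    have : T 0 = 0 := by
      show (∑ i, ∑ j, if j < i then b.repr (0:M) i * (b.repr (0:M) j * D i j) else 0)
        + ∑ i, CocAux.hI (b.repr (0:M) i) * D i i = 0
      simp [CocAux.hI_zero]
    rw [this]; rfl
  refine ⟨⟨fun p => (p.1 * CocAux.chi (f p.2), p.2),
          fun p => (p.1 * CocAux.chi (f p.2), p.2), ?_, ?_⟩, ?_, ?_, ?_⟩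
  · intro p
    simp [mul_assoc, CocAux.chi_mul_self]
  · intro p
    simp [mul_assoc, CocAux.chi_mul_self]
  · intro x y
    show ((x.1 * y.1 * (-1 : ℤˣ) ^ (ε x.2 y.2)) * CocAux.chi (f (x.2 + y.2)), x.2 + y.2)
      = ((x.1 * CocAux.chi (f x.2)) * (y.1 * CocAux.chi (f y.2))
          * (-1 : ℤˣ) ^ (ε' x.2 y.2), x.2 + y.2)
    refine Prod.ext ?_ rfl
    show (x.1 * y.1 * (-1 : ℤˣ) ^ (ε x.2 y.2)) * CocAux.chi (f (x.2 + y.2))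
      = (x.1 * CocAux.chi (f x.2)) * (y.1 * CocAux.chi (f y.2)) * (-1 : ℤˣ) ^ (ε' x.2 y.2)
    rw [CocAux.neg_one_zpow, CocAux.neg_one_zpow, hf_add x.2 y.2]
    have hsub : ((ε x.2 y.2 - ε' x.2 y.2 : ℤ) : ZMod 2)
        = ((ε x.2 y.2 : ℤ) : ZMod 2) + ((ε' x.2 y.2 : ℤ) : ZMod 2) := by
      push_cast
      rw [sub_eq_add_neg, CocAux.zmod2_neg]
    rw [hsub, CocAux.chi_add, CocAux.chi_add, CocAux.chi_add]
    rw [Units.ext_iff]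
    simp only [Units.val_mul]
    linear_combination ((x.1 : ℤ) * (y.1 : ℤ) * (CocAux.chi (f x.2) : ℤ)
        * (CocAux.chi (f y.2) : ℤ) * (CocAux.chi ((ε' x.2 y.2 : ℤ) : ZMod 2) : ℤ))
      * CocAux.chi_coe_mul_self ((ε x.2 y.2 : ℤ) : ZMod 2)
  · intro θ
    show (θ * CocAux.chi (f 0), (0:M)) = (θ, 0)
    rw [f0, CocAux.chi_zero, mul_one]
  · intro p
    rfl
end

section
/- Let γ be an invertible real m×m matrix and B an invertible real antisymmetric m×m matrix; set γ⋆ := (γᵀ)⁻¹, 𝐠 := γγᵀ, 𝐛 := γBγᵀ. Then: (i) the matrices 𝟙+B, 𝟙−B and B−B⁻¹ are invertible, and 𝐛 − 𝐠𝐛⁻¹𝐠 = γ(B−B⁻¹)γᵀ is invertible; (ii) defining γ₊ := 2((γ + 𝐛γ⋆)ᵀ)⁻¹, γ₋ := 2((γ − 𝐛γ⋆)ᵀ)⁻¹, γ₊⋆ := ½(γ + 𝐛γ⋆), γ₋⋆ := ½(γ − 𝐛γ⋆), and B' := (γ + 𝐛γ⋆)ᵀ(𝐛 − 𝐠𝐛⁻¹𝐠)⁻¹(γ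 + 𝐛γ⋆), one has γ₊⋆ = ½γ(B+𝟙), γ₋⋆ = −½γ(B−𝟙), γ₊·(B'+𝟙)/2 = γ⋆, and γ₋·(B'−𝟙)/2 = −γ⋆; (iii) consequently the 2m×2m block matrices satisfy [[γ₊⋆, −γ₋⋆],[γ₊(B'+𝟙)/2, −γ₋(B'−𝟙)/2]] = [[0,𝟙],[𝟙,0]]·[[γ⋆, γ⋆],[γ(B+𝟙)/2, γ(B−𝟙)/2]], so this transformation preserves the lattice generated by the rows of [[γ⋆, γ⋆],[γ(B+𝟙)/2, γ(B−𝟙)/2]]. -/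
open Matrix

noncomputable section

private lemma antisym_one_add_det_isUnit (m : ℕ) (B : Matrix (Fin m) (Fin m) ℝ)
    (hB : Bᵀ = -B) : IsUnit (1 + B).det := by
  rw [isUnit_iff_ne_zero]
  intro h
  obtain ⟨v, hv, hv0⟩ := (Matrix.exists_mulVec_eq_zero_iff).mpr h
  have h2 : v ⬝ᵥ (B *ᵥ v) = 0 := by
    have h3 : v ⬝ᵥ (B *ᵥ v) = -(v ⬝ᵥ (B *ᵥ v)) := by
      conv_lhs => rw [Matrix.dotProduct_mulVec]
      rw [← Matrix.mulVec_transpose, hB]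
      simp [Matrix.neg_mulVec, dotProduct_comm]
    linarith
  have h1 : v ⬝ᵥ ((1 + B) *ᵥ v) = 0 := by rw [hv0]; simp
  rw [Matrix.add_mulVec, Matrix.one_mulVec, dotProduct_add, h2, add_zero] at h1
  exact hv (dotProduct_self_eq_zero.mp h1)

private lemma comm_nonsing_inv {m : ℕ} {A C : Matrix (Fin m) (Fin m) ℝ}
    (hC : IsUnit C.det) (h : A * C = C * A) : C⁻¹ * A = A * C⁻¹ := by
  have hx : ∀ X, C⁻¹ * (C * X) = X := fun X => by
    rw [← Matrix.mul_assoc, Matrix.nonsing_inv_mul _ hC, one_mul]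
  have h2 := congrArg (fun X => C⁻¹ * X * C⁻¹) h
  simp only [Matrix.mul_assoc, hx] at h2
  simpa [Matrix.mul_nonsing_inv _ hC] using h2

/-- Matrix identities underlying the `T-duality` transformation of the generator matrix
`𝒢_{Λ_S} = [[γ⋆, γ⋆],[γ(B+𝟙)/2, γ(B−𝟙)/2]]`:  with `g = γγᵀ`, `b = γBγᵀ` and `B`
invertible antisymmetric, `𝟙+B`, `𝟙−B`, `B−B⁻¹` and `b − g b⁻¹ g = γ(B−B⁻¹)γᵀ` are
invertible; the matrices `γ₊ = 2((γ+bγ⋆)ᵀ)⁻¹`, `γ₋ = 2((γ−bγ⋆)ᵀ)⁻¹`, `γ₊⋆ = (γ+bγ⋆)/2`,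
`γ₋⋆ = (γ−bγ⋆)/2` and `B' = (γ+bγ⋆)ᵀ(b−gb⁻¹g)⁻¹(γ+bγ⋆)` satisfy `γ₊⋆ = γ(B+𝟙)/2`,
`γ₋⋆ = −γ(B−𝟙)/2`, `γ₊(B'+𝟙)/2 = γ⋆`, `γ₋(B'−𝟙)/2 = −γ⋆`; and consequently the transformed
block generator matrix equals `[[0,𝟙],[𝟙,0]]` times the original one, so the transformation
preserves the lattice. -/
theorem tduality_matrix_identities (m : ℕ) (γ B : Matrix (Fin m) (Fin m) ℝ)
    (hγ : IsUnit γ.det) (hB : Bᵀ = -B) (hBinv : IsUnit B.det) :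
    let g : Matrix (Fin m) (Fin m) ℝ := γ * γᵀ
    let b : Matrix (Fin m) (Fin m) ℝ := γ * B * γᵀ
    let γs : Matrix (Fin m) (Fin m) ℝ := (γᵀ)⁻¹
    let γp : Matrix (Fin m) (Fin m) ℝ := (2 : ℝ) • ((γ + b * γs)ᵀ)⁻¹
    let γm : Matrix (Fin m) (Fin m) ℝ := (2 : ℝ) • ((γ - b * γs)ᵀ)⁻¹
    let γps : Matrix (Fin m) (Fin m) ℝ := (1 / 2 : ℝ) • (γ + b * γs)
    let γms : Matrix (Fin m) (Fin m) ℝ := (1 / 2 : ℝ) • (γ - b * γs)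
    let B' : Matrix (Fin m) (Fin m) ℝ :=
      (γ + b * γs)ᵀ * (b - g * b⁻¹ * g)⁻¹ * (γ + b * γs)
    IsUnit (1 + B).det ∧ IsUnit (1 - B).det ∧ IsUnit (B - B⁻¹).det ∧
      b - g * b⁻¹ * g = γ * (B - B⁻¹) * γᵀ ∧ IsUnit (b - g * b⁻¹ * g).det ∧
      γps = (1 / 2 : ℝ) • (γ * (B + 1)) ∧
      γms = -((1 / 2 : ℝ) • (γ * (B - 1))) ∧
      γp * ((1 / 2 : ℝ) • (B' + 1)) = γs ∧
      γm * ((1 / 2 : ℝ) • (B' - 1)) = -γs ∧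
      Matrix.fromBlocks γps (-γms) (γp * ((1 / 2 : ℝ) • (B' + 1)))
          (-(γm * ((1 / 2 : ℝ) • (B' - 1)))) =
        Matrix.fromBlocks (0 : Matrix (Fin m) (Fin m) ℝ) 1 1 0 *
          Matrix.fromBlocks γs γs ((1 / 2 : ℝ) • (γ * (B + 1)))
            ((1 / 2 : ℝ) • (γ * (B - 1))) := by
  intro g b γs γp γm γps γms B'
  -- determinant units
  have hdγT : IsUnit γᵀ.det := by rwa [Matrix.det_transpose]
  have h1pB : IsUnit (1 + B).det := antisym_one_add_det_isUnit m B hB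
  have hT : (1 + B)ᵀ = 1 - B := by rw [Matrix.transpose_add, Matrix.transpose_one, hB]; abel
  have h1mB : IsUnit (1 - B).det := by rw [← hT, Matrix.det_transpose]; exact h1pB
  have hBp1 : IsUnit (B + 1).det := by rwa [add_comm]
  have hBB : B⁻¹ * B = 1 := Matrix.nonsing_inv_mul B hBinv
  -- factorization of B - B⁻¹
  have hfact : B - B⁻¹ = (-B⁻¹) * ((1 - B) * (B + 1)) := by
    have e1 : (-B⁻¹) * ((1 - B) * (B + 1)) = -B⁻¹ + (B⁻¹ * B) * B := by noncomm_ring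
    rw [e1, hBB, one_mul]; abel
  have hdninv : IsUnit (B⁻¹).det := Matrix.isUnit_nonsing_inv_det B hBinv
  have hdneg : IsUnit (-B⁻¹ : Matrix (Fin m) (Fin m) ℝ).det := by
    rw [Matrix.det_neg]; exact (isUnit_one.neg.pow _).mul hdninv
  have hdBB : IsUnit (B - B⁻¹).det := by
    rw [hfact, Matrix.det_mul, Matrix.det_mul]
    exact hdneg.mul (h1mB.mul hBp1)
  -- cancellation helpers
  have hcT : ∀ X : Matrix (Fin m) (Fin m) ℝ, γᵀ * ((γᵀ)⁻¹ * X) = X := fun X => by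
    rw [← Matrix.mul_assoc, Matrix.mul_nonsing_inv _ hdγT, one_mul]
  have hcT' : ∀ X : Matrix (Fin m) (Fin m) ℝ, (γᵀ)⁻¹ * (γᵀ * X) = X := fun X => by
    rw [← Matrix.mul_assoc, Matrix.nonsing_inv_mul _ hdγT, one_mul]
  have hcγ : ∀ X : Matrix (Fin m) (Fin m) ℝ, γ⁻¹ * (γ * X) = X := fun X => by
    rw [← Matrix.mul_assoc, Matrix.nonsing_inv_mul _ hγ, one_mul]
  have hcγ' : ∀ X : Matrix (Fin m) (Fin m) ℝ, γ * (γ⁻¹ * X) = X := fun X => by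
    rw [← Matrix.mul_assoc, Matrix.mul_nonsing_inv _ hγ, one_mul]
  have hcP : ∀ X : Matrix (Fin m) (Fin m) ℝ, (B + 1) * ((B + 1)⁻¹ * X) = X := fun X => by
    rw [← Matrix.mul_assoc, Matrix.mul_nonsing_inv _ hBp1, one_mul]
  have hcP' : ∀ X : Matrix (Fin m) (Fin m) ℝ, (B + 1)⁻¹ * ((B + 1) * X) = X := fun X => by
    rw [← Matrix.mul_assoc, Matrix.nonsing_inv_mul _ hBp1, one_mul]
  have hcM : ∀ X : Matrix (Fin m) (Fin m) ℝ, (1 - B) * ((1 - B)⁻¹ * X) = X := fun X => by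
    rw [← Matrix.mul_assoc, Matrix.mul_nonsing_inv _ h1mB, one_mul]
  have hcM' : ∀ X : Matrix (Fin m) (Fin m) ℝ, (1 - B)⁻¹ * ((1 - B) * X) = X := fun X => by
    rw [← Matrix.mul_assoc, Matrix.nonsing_inv_mul _ h1mB, one_mul]
  -- basic simplifications
  have hbγs : b * γs = γ * B := by
    show γ * B * γᵀ * (γᵀ)⁻¹ = γ * B
    rw [Matrix.mul_assoc, Matrix.mul_nonsing_inv _ hdγT, mul_one]
  have hplus : γ + b * γs = γ * (B + 1) := by rw [hbγs]; noncomm_ring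
  have hminus : γ - b * γs = γ * (1 - B) := by rw [hbγs]; noncomm_ring
  have hbinv : b⁻¹ = (γᵀ)⁻¹ * (B⁻¹ * γ⁻¹) := by
    show (γ * B * γᵀ)⁻¹ = _
    rw [Matrix.mul_inv_rev, Matrix.mul_inv_rev]
  -- part 4
  have hkey : b - g * b⁻¹ * g = γ * (B - B⁻¹) * γᵀ := by
    have hmid : g * b⁻¹ * g = γ * B⁻¹ * γᵀ := by
      rw [hbinv]
      show γ * γᵀ * ((γᵀ)⁻¹ * (B⁻¹ * γ⁻¹)) * (γ * γᵀ) = γ * B⁻¹ * γᵀ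
      simp only [Matrix.mul_assoc, hcT, hcγ, hcT', hcγ']
    show b - g * b⁻¹ * g = _
    rw [hmid]
    show γ * B * γᵀ - γ * B⁻¹ * γᵀ = _
    noncomm_ring
  have hdkey : IsUnit (b - g * b⁻¹ * g).det := by
    rw [hkey, Matrix.det_mul, Matrix.det_mul]
    exact (hγ.mul hdBB).mul hdγT
  -- inverse of B - B⁻¹
  have hinvBB : (B - B⁻¹)⁻¹ = (B + 1)⁻¹ * ((1 - B)⁻¹ * (-B)) := by
    apply Matrix.inv_eq_right_inv
    rw [hfact]
    have h : -B⁻¹ * ((1 - B) * (B + 1)) * ((B + 1)⁻¹ * ((1 - B)⁻¹ * -B))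
        = -B⁻¹ * ((1 - B) * ((B + 1) * ((B + 1)⁻¹ * ((1 - B)⁻¹ * -B)))) := by
      simp only [Matrix.mul_assoc]
    rw [h, hcP, hcM, neg_mul_neg, hBB]
  -- B' = -B
  have hTp : (B + 1)ᵀ = 1 - B := by
    rw [Matrix.transpose_add, Matrix.transpose_one, hB]; abel
  have hB' : B' = -B := by
    show (γ + b * γs)ᵀ * (b - g * b⁻¹ * g)⁻¹ * (γ + b * γs) = -B
    rw [hplus, hkey, Matrix.mul_inv_rev, Matrix.mul_inv_rev, hinvBB,
      Matrix.transpose_mul, hTp]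
    have hcomm1 : (-B) * (B + 1) = (B + 1) * (-B) := by noncomm_ring
    have hcomm2 : (1 - B)⁻¹ * (B + 1) = (B + 1) * (1 - B)⁻¹ :=
      comm_nonsing_inv h1mB (by noncomm_ring)
    calc (1 - B) * γᵀ * ((γᵀ)⁻¹ * ((B + 1)⁻¹ * ((1 - B)⁻¹ * -B) * γ⁻¹)) * (γ * (B + 1))
        = (1 - B) * ((B + 1)⁻¹ * ((1 - B)⁻¹ * ((-B) * (B + 1)))) := by
          simp only [Matrix.mul_assoc, hcT, hcγ', hcT', hcγ]
      _ = (1 - B) * ((B + 1)⁻¹ * ((1 - B)⁻¹ * ((B + 1) * (-B)))) := by rw [hcomm1]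
      _ = (1 - B) * ((B + 1)⁻¹ * ((B + 1) * ((1 - B)⁻¹ * (-B)))) := by
          rw [← Matrix.mul_assoc ((1 - B)⁻¹) (B + 1) (-B), hcomm2, Matrix.mul_assoc]
      _ = -B := by rw [hcP', hcM]
  -- γp, γm expressions
  have hγp : γp = (2 : ℝ) • ((γᵀ)⁻¹ * (1 - B)⁻¹) := by
    show (2 : ℝ) • ((γ + b * γs)ᵀ)⁻¹ = _
    rw [hplus, Matrix.transpose_mul, Matrix.mul_inv_rev, hTp]
  have hγm : γm = (2 : ℝ) • ((γᵀ)⁻¹ * (B + 1)⁻¹) := by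
    show (2 : ℝ) • ((γ - b * γs)ᵀ)⁻¹ = _
    rw [hminus, Matrix.transpose_mul, Matrix.mul_inv_rev]
    have hTm : (1 - B)ᵀ = B + 1 := by
      rw [Matrix.transpose_sub, Matrix.transpose_one, hB]; abel
    rw [hTm]
  -- the four matrix identities
  have hps : γps = (1 / 2 : ℝ) • (γ * (B + 1)) := by
    show (1 / 2 : ℝ) • (γ + b * γs) = _
    rw [hplus]
  have hms : γms = -((1 / 2 : ℝ) • (γ * (B - 1))) := by
    show (1 / 2 : ℝ) • (γ - b * γs) = _
    rw [hminus, ← smul_neg]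
    congr 1
    noncomm_ring
  have hpinv : γp * ((1 / 2 : ℝ) • (B' + 1)) = γs := by
    rw [hγp, hB']
    have h1 : (-B + 1 : Matrix (Fin m) (Fin m) ℝ) = 1 - B := by abel
    rw [h1, Matrix.smul_mul, Matrix.mul_smul, smul_smul]
    norm_num
    show (γᵀ)⁻¹ * (1 - B)⁻¹ * (1 - B) = γs
    rw [Matrix.mul_assoc, Matrix.nonsing_inv_mul _ h1mB, mul_one]
  have hminv : γm * ((1 / 2 : ℝ) • (B' - 1)) = -γs := by
    rw [hγm, hB']
    have h1 : (-B - 1 : Matrix (Fin m) (Fin m) ℝ) = -(B + 1) := by abel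
    rw [h1, smul_neg, Matrix.mul_neg, Matrix.smul_mul, Matrix.mul_smul, smul_smul]
    norm_num
    show (γᵀ)⁻¹ * (B + 1)⁻¹ * (B + 1) = γs
    rw [Matrix.mul_assoc, Matrix.nonsing_inv_mul _ hBp1, mul_one]
  refine ⟨h1pB, h1mB, hdBB, hkey, hdkey, hps, hms, hpinv, hminv, ?_⟩
  rw [hps, hms, hpinv, hminv, Matrix.fromBlocks_multiply]
  simp [neg_neg]
end
end

section
/- For every s ∈ ℂ and every integer k ≥ 1, one has (−1)^k · binom(s,k) = Σ_{ℓ=1}^{k} ((−s)^ℓ / ℓ!) · Σ_{(n₁,…,n_ℓ)} 1/(n₁ n₂ ⋯ n_ℓ), where the inner sum runs over all ℓ-tuples of positive integers (n₁,…,n_ℓ) with n₁ + ⋯ + n_ℓ = k, and binom(s,k) := s(s−1)⋯(s−k+1)/k! is the generalized binomial coefficient. -/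
noncomputable section

/-- The generalized binomial coefficient `binom(s,k) = s(s−1)⋯(s−k+1)/k!`. -/
def cbinom (s : ℂ) (k : ℕ) : ℂ :=
  (∏ i ∈ Finset.range k, (s - (i : ℂ))) / (Nat.factorial k : ℂ)

namespace CbinomAux

open Finset

/-- compositions of `k` into `ℓ` positive parts -/
def T (ℓ k : ℕ) : Finset (Fin ℓ → ℕ) :=
  (Finset.Nat.antidiagonalTuple ℓ k).filter (fun n => ∀ i, 0 < n i)

lemma mem_T {ℓ k : ℕ} {n : Fin ℓ → ℕ} :
    n ∈ T ℓ k ↔ (∑ i, n i = k) ∧ ∀ i, 0 < n i := by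
  simp [T, Finset.Nat.mem_antidiagonalTuple]

def f (ℓ k : ℕ) : ℂ := ∑ n ∈ T ℓ k, 1 / ∏ i, (n i : ℂ)

lemma f_zero_zero : f 0 0 = 1 := by
  have h : T 0 0 = {![]} := by
    ext n
    simp only [mem_T, Finset.mem_singleton]
    constructor
    · intro _; exact funext (fun i => i.elim0)
    · intro h; subst h; simp
  simp [f, h]

lemma f_zero_pos {k : ℕ} (hk : 0 < k) : f 0 k = 0 := by
  have h : T 0 k = ∅ := by
    ext n
    simp only [mem_T, Finset.notMem_empty, iff_false, not_and]
    intro hs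
    simp at hs
    omega
  simp [f, h]

lemma f_eq_zero_of_lt {ℓ k : ℕ} (h : k < ℓ) : f ℓ k = 0 := by
  have hT : T ℓ k = ∅ := by
    ext n
    simp only [mem_T, Finset.notMem_empty, iff_false, not_and]
    intro hs hpos
    have : (Finset.univ : Finset (Fin ℓ)).card • 1 ≤ ∑ i, n i :=
      Finset.card_nsmul_le_sum _ _ 1 (fun i _ => hpos i)
    simp [hs] at this
    omega
  simp [f, hT]

end CbinomAux

namespace CbinomAux
open Finset

lemma sum_comp_swap (m k : ℕ) (i : Fin (m+1)) :
    ∑ n ∈ T (m+1) k, (n i : ℂ) / ∏ j, (n j : ℂ)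
      = ∑ n ∈ T (m+1) k, (n (Fin.last m) : ℂ) / ∏ j, (n j : ℂ) := by
  refine Finset.sum_nbij' (fun n => n ∘ Equiv.swap i (Fin.last m))
    (fun n => n ∘ Equiv.swap i (Fin.last m)) ?_ ?_ ?_ ?_ ?_
  · intro n hn
    rw [mem_T] at hn ⊢
    exact ⟨(Equiv.sum_comp (Equiv.swap i (Fin.last m)) n).trans hn.1,
      fun j => hn.2 _⟩
  · intro n hn
    rw [mem_T] at hn ⊢
    exact ⟨(Equiv.sum_comp (Equiv.swap i (Fin.last m)) n).trans hn.1,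
      fun j => hn.2 _⟩
  · intro n _
    funext j
    simp [Function.comp]
  · intro n _
    funext j
    simp [Function.comp]
  · intro n _
    simp only [Function.comp]
    rw [Equiv.swap_apply_right]
    congr 1
    exact (Equiv.prod_comp (Equiv.swap i (Fin.last m)) (fun j => (n j : ℂ))).symm

end CbinomAux

namespace CbinomAux
open Finset

lemma sum_last (m k : ℕ) :
    ∑ n ∈ T (m+1) k, (n (Fin.last m) : ℂ) / ∏ j, (n j : ℂ)
      = ∑ j ∈ Finset.range k, f m j := by
  have hrhs : ∑ j ∈ Finset.range k, f m j
      = ∑ p ∈ (Finset.range k).sigma (fun j => T m j), 1 / ∏ i, (p.2 i : ℂ) := by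
    rw [Finset.sum_sigma]
    rfl
  rw [hrhs]
  refine Finset.sum_nbij' (fun n => ⟨k - n (Fin.last m), Fin.init n⟩)
    (fun p => Fin.snoc p.2 (k - p.1)) ?_ ?_ ?_ ?_ ?_
  · intro n hn
    rw [mem_T] at hn
    obtain ⟨hs, hp⟩ := hn
    have hsum : ∑ i : Fin m, n (Fin.castSucc i) + n (Fin.last m) = k := by
      rw [← hs, Fin.sum_univ_castSucc]
    have hlast : 1 ≤ n (Fin.last m) := hp _
    simp only [Finset.mem_sigma, Finset.mem_range, mem_T]
    refine ⟨by omega, ?_, fun i => hp _⟩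
    simp only [Fin.init]
    omega
  · rintro ⟨j, q⟩ hp
    simp only [Finset.mem_sigma, Finset.mem_range, mem_T] at hp
    obtain ⟨hj, hs, hpos⟩ := hp
    rw [mem_T]
    constructor
    · rw [Fin.sum_univ_castSucc]
      simp only [Fin.snoc_castSucc, Fin.snoc_last]
      omega
    · intro i
      induction i using Fin.lastCases with
      | last => simp only [Fin.snoc_last]; omega
      | cast i => simp only [Fin.snoc_castSucc]; exact hpos i
  · intro n hn
    rw [mem_T] at hn
    have hs := hn.1
    rw [Fin.sum_univ_castSucc] at hs
    show Fin.snoc (Fin.init n) (k - (k - n (Fin.last m))) = n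
    have h2 : k - (k - n (Fin.last m)) = n (Fin.last m) := by omega
    rw [h2, Fin.snoc_init_self]
  · rintro ⟨j, q⟩ hp
    simp only [Finset.mem_sigma, Finset.mem_range, mem_T] at hp
    obtain ⟨hj, hs, hpos⟩ := hp
    simp only [Fin.snoc_last, Fin.init_snoc]
    have : k - (k - j) = j := by omega
    simp [this]
  · intro n hn
    rw [mem_T] at hn
    obtain ⟨hs, hp⟩ := hn
    have hprod : ∏ j, (n j : ℂ)
        = (∏ i : Fin m, (Fin.init n i : ℂ)) * (n (Fin.last m) : ℂ) := by
      rw [Fin.prod_univ_castSucc]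
      rfl
    have hne : (n (Fin.last m) : ℂ) ≠ 0 := by
      exact_mod_cast (hp (Fin.last m)).ne'
    show (n (Fin.last m) : ℂ) / ∏ j, (n j : ℂ) = 1 / ∏ i : Fin m, (Fin.init n i : ℂ)
    rw [hprod, mul_comm, ← div_div, div_self hne]

end CbinomAux

namespace CbinomAux
open Finset

lemma key (m k : ℕ) :
    (k : ℂ) * f (m+1) k = ((m : ℂ) + 1) * ∑ j ∈ Finset.range k, f m j := by
  rw [f, Finset.mul_sum]
  have h1 : ∀ n ∈ T (m+1) k,
      (k : ℂ) * (1 / ∏ i, (n i : ℂ)) = ∑ i, (n i : ℂ) / ∏ j, (n j : ℂ) := by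
    intro n hn
    rw [mem_T] at hn
    have hk : (k : ℂ) = ∑ i, (n i : ℂ) := by
      rw [← hn.1]; push_cast; ring
    rw [hk, Finset.sum_mul]
    exact Finset.sum_congr rfl (fun i _ => by rw [mul_one_div])
  rw [Finset.sum_congr rfl h1, Finset.sum_comm]
  rw [Finset.sum_congr rfl
    (fun i _ => (sum_comp_swap m k i).trans (sum_last m k))]
  rw [Finset.sum_const, Finset.card_univ, Fintype.card_fin, nsmul_eq_mul]
  push_cast
  ring

end CbinomAux

namespace CbinomAux
open Finset

def R (s : ℂ) (k : ℕ) : ℂ :=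
  ∑ ℓ ∈ Finset.range (k+1), (-s) ^ ℓ / (Nat.factorial ℓ : ℂ) * f ℓ k

lemma R_zero (s : ℂ) : R s 0 = 1 := by
  simp [R, f_zero_zero]

lemma R_partial (s : ℂ) {j K : ℕ} (hj : j ≤ K) :
    ∑ ℓ ∈ Finset.range (K+1), (-s) ^ ℓ / (Nat.factorial ℓ : ℂ) * f ℓ j = R s j := by
  rw [R]
  symm
  refine Finset.sum_subset (by intro x hx; simp at hx ⊢; omega) ?_
  intro x hx hnx
  simp only [Finset.mem_range] at hx hnx
  rw [f_eq_zero_of_lt (by omega), mul_zero]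

lemma R_rec (s : ℂ) (k : ℕ) :
    ((k : ℂ) + 1) * R s (k+1) = -s * ∑ j ∈ Finset.range (k+1), R s j := by
  rw [R, Finset.mul_sum]
  rw [Finset.sum_range_succ']
  have h0 : ((k:ℂ)+1) * ((-s)^0 / (Nat.factorial 0 : ℂ) * f 0 (k+1)) = 0 := by
    rw [f_zero_pos (Nat.succ_pos k)]; ring
  rw [h0, add_zero]
  have h1 : ∀ m ∈ Finset.range (k+1),
      ((k:ℂ)+1) * ((-s)^(m+1) / (Nat.factorial (m+1) : ℂ) * f (m+1) (k+1))
        = -s * ((-s)^m / (Nat.factorial m : ℂ) * ∑ j ∈ Finset.range (k+1), f m j) := by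
    intro m _
    have hkey2 : ((k:ℂ)+1) * f (m+1) (k+1)
        = ((m:ℂ)+1) * ∑ j ∈ Finset.range (k+1), f m j := by
      have := key m (k+1); push_cast at this; exact this
    have hfac : (Nat.factorial (m+1) : ℂ) = ((m:ℂ)+1) * (Nat.factorial m : ℂ) := by
      rw [Nat.factorial_succ]; push_cast; ring
    have hm : ((m:ℂ)+1) ≠ 0 := Nat.cast_add_one_ne_zero m
    have hfacne : (Nat.factorial m : ℂ) ≠ 0 := by
      exact_mod_cast (Nat.factorial_pos m).ne'
    calc ((k:ℂ)+1) * ((-s)^(m+1) / (Nat.factorial (m+1) : ℂ) * f (m+1) (k+1))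
        = (-s)^(m+1) / (Nat.factorial (m+1) : ℂ) * (((k:ℂ)+1) * f (m+1) (k+1)) := by
          ring
      _ = (-s)^(m+1) / (((m:ℂ)+1) * (Nat.factorial m : ℂ))
            * (((m:ℂ)+1) * ∑ j ∈ Finset.range (k+1), f m j) := by rw [hkey2, hfac]
      _ = -s * ((-s)^m / (Nat.factorial m : ℂ) * ∑ j ∈ Finset.range (k+1), f m j) := by
          rw [pow_succ]
          field_simp
  rw [Finset.sum_congr rfl h1, ← Finset.mul_sum]
  congr 1
  simp_rw [Finset.mul_sum]
  rw [Finset.sum_comm]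
  exact Finset.sum_congr rfl
    (fun j hj => R_partial s (by simp only [Finset.mem_range] at hj; omega))

end CbinomAux

namespace CbinomAux
open Finset

lemma cbinom_succ (s : ℂ) (k : ℕ) :
    cbinom s (k+1) = cbinom s k * (s - k) / ((k : ℂ) + 1) := by
  unfold cbinom
  rw [Finset.prod_range_succ, Nat.factorial_succ]
  have h1 : (Nat.factorial k : ℂ) ≠ 0 := by
    exact_mod_cast (Nat.factorial_pos k).ne'
  have h2 : ((k:ℂ)+1) ≠ 0 := Nat.cast_add_one_ne_zero k
  push_cast
  field_simp

lemma L_rec (s : ℂ) (k : ℕ) :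
    ((k : ℂ) + 1) * ((-1:ℂ)^(k+1) * cbinom s (k+1))
      = -s * ∑ j ∈ Finset.range (k+1), (-1:ℂ)^j * cbinom s j := by
  induction k with
  | zero =>
    simp [cbinom]
  | succ k ih =>
    have h2 : ((k:ℂ)+1+1) ≠ 0 := by
      have := Nat.cast_add_one_ne_zero (R := ℂ) (k+1)
      push_cast at this; exact this
    rw [Finset.sum_range_succ, mul_add, ← ih]
    rw [cbinom_succ s (k+1)]
    push_cast
    field_simp
    ring

lemma main_eq (s : ℂ) (k : ℕ) : (-1:ℂ)^k * cbinom s k = R s k := by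
  induction k using Nat.strong_induction_on with
  | _ k ih =>
    match k with
    | 0 => simp [cbinom, R_zero]
    | Nat.succ k =>
      have h1 := L_rec s k
      have h2 := R_rec s k
      have hS : ∑ j ∈ Finset.range (k+1), (-1:ℂ)^j * cbinom s j
          = ∑ j ∈ Finset.range (k+1), R s j :=
        Finset.sum_congr rfl (fun j hj => ih j (by simp only [Finset.mem_range] at hj; omega))
      rw [hS, ← h2] at h1
      have hk : ((k:ℂ)+1) ≠ 0 := Nat.cast_add_one_ne_zero k
      exact mul_left_cancel₀ hk h1

end CbinomAux

/-- For every `s ∈ ℂ` and every integer `k ≥ 1`,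
`(−1)^k · binom(s,k) = ∑_{ℓ=1}^{k} ((−s)^ℓ/ℓ!) · ∑_{n₁+⋯+n_ℓ=k, nᵢ ≥ 1} 1/(n₁ n₂ ⋯ n_ℓ)`. -/
theorem neg_one_pow_mul_cbinom_eq (s : ℂ) (k : ℕ) (hk : 1 ≤ k) :
    (-1 : ℂ) ^ k * cbinom s k =
      ∑ ℓ ∈ Finset.Icc 1 k, ((-s) ^ ℓ / (Nat.factorial ℓ : ℂ)) *
        ∑ n ∈ (Finset.Nat.antidiagonalTuple ℓ k).filter (fun n => ∀ i, 0 < n i),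
          1 / ∏ i, (n i : ℂ) := by
  rw [CbinomAux.main_eq, CbinomAux.R]
  have hr : Finset.range (k+1) = insert 0 (Finset.Icc 1 k) := by
    ext x; simp; omega
  rw [hr, Finset.sum_insert (by simp)]
  rw [CbinomAux.f_zero_pos (by omega)]
  simp only [mul_zero, zero_add]
  rfl
end
end
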